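/- arXiv:1603.04151 — 6 statements merged into one kernel-verified Lean document; each statement's English description precedes it below -/
import Mathlib

section
/- Let A be an m×m real symmetric matrix with m ≥ 2, let k ∈ {1,...,m}, and let B be the (m−1)×(m−1) principal submatrix of A obtained by deleting row k and column k of A. If λ_1 ≤ λ_2 ≤ ... ≤ λ_m are the eigenvalues of A and μ_1 ≤ μ_2 ≤ ... ≤ μ_{m−1} are the eigenvalues of B (each listed with multiplicity), then λ_p ≤ μ_p ≤ λ_{p+1} for every p with 1 ≤ p ≤ m−1. -/
/-!
Let `J : ℝⁿ → ℝⁿ⁺¹` insert a zero at position `k`; then `⟪B y, y⟫ = ⟪A (J y), J y⟫` and `J` is an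
isometry. For `μ_p ≤ λ_{p+1}`: the eigenvectors of `A` with eigenvalue at most `λ_{p+1}` span a
space of dimension at least `p + 1`, and the images under `J` of the eigenvectors of `B` with
eigenvalue at least `μ_p` span one of dimension at least `n + 1 - p`. As these dimensions add up to
more than `n + 1`, the two spaces share some `J y ≠ 0`, and then
`μ_p ‖y‖² ≤ ⟪B y, y⟫ = ⟪A (J y), J y⟫ ≤ λ_{p+1} ‖y‖²`.
The inequality `λ_p ≤ μ_p` is the same argument applied to `-A` and `-B`.
-/

open Polynomial Matrix Finset Module Submodule

lemma Submodule.exists_mem_inf_ne_zero_of_finrank_lt {K V : Type*} [DivisionRing K]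
    [AddCommGroup V] [Module K V] [FiniteDimensional K V] {U W : Submodule K V}
    (h : finrank K V < finrank K U + finrank K W) : ∃ x ∈ U ⊓ W, x ≠ 0 := by
  refine exists_mem_ne_zero_of_ne_bot fun hUW => ?_
  have hsum := finrank_sup_add_finrank_inf_eq U W
  rw [hUW, finrank_bot] at hsum
  have := (U ⊔ W).finrank_le
  omega

section RayleighQuotient

open RealInnerProductSpace

variable {E : Type*} [NormedAddCommGroup E] [InnerProductSpace ℝ E]
  {ι : Type*} [Fintype ι] {v : ι → E} {T : E →ₗ[ℝ] E} {t : ι → ℝ}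

lemma Orthonormal.inner_map_self_le_of_mem_span (hv : Orthonormal ℝ v)
    (hT : ∀ i, T (v i) = t i • v i) {c : ℝ} (hc : ∀ i, t i ≤ c) {x : E}
    (hx : x ∈ span ℝ (Set.range v)) : ⟪T x, x⟫ ≤ c * ‖x‖ ^ 2 := by
  obtain ⟨a, rfl⟩ := (mem_span_range_iff_exists_fun ℝ).1 hx
  have hTx : T (∑ i, a i • v i) = ∑ i, (a i * t i) • v i := by
    simp [hT, mul_smul, smul_comm (a _)]
  rw [hTx, ← real_inner_self_eq_norm_sq, hv.inner_sum, hv.inner_sum, Finset.mul_sum]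
  refine Finset.sum_le_sum fun i _ => ?_
  simp only [conj_trivial]
  nlinarith [hc i, mul_self_nonneg (a i)]

lemma Orthonormal.le_inner_map_self_of_mem_span (hv : Orthonormal ℝ v)
    (hT : ∀ i, T (v i) = t i • v i) {c : ℝ} (hc : ∀ i, c ≤ t i) {x : E}
    (hx : x ∈ span ℝ (Set.range v)) : c * ‖x‖ ^ 2 ≤ ⟪T x, x⟫ := by
  have := hv.inner_map_self_le_of_mem_span (T := -T) (t := -t) (c := -c)
    (fun i => by simp [hT, neg_smul]) (fun i => neg_le_neg (hc i)) hx
  simpa using this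

theorem LinearIsometry.le_of_finrank_lt_card_add_card {F : Type*} [NormedAddCommGroup F]
    [InnerProductSpace ℝ F] [FiniteDimensional ℝ E] (J : F →ₗᵢ[ℝ] E) {S : F →ₗ[ℝ] F}
    (hJ : ∀ y, ⟪S y, y⟫ = ⟪T (J y), J y⟫) {κ : Type*} [Fintype κ] {w : κ → F}
    (hv : Orthonormal ℝ v) (hw : Orthonormal ℝ w) {s : κ → ℝ}
    (hvT : ∀ i, T (v i) = t i • v i) (hwS : ∀ j, S (w j) = s j • w j)
    {a b : ℝ} (ha : ∀ i, t i ≤ a) (hb : ∀ j, b ≤ s j)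
    (hcard : finrank ℝ E < Fintype.card ι + Fintype.card κ) : b ≤ a := by
  have hJw : (span ℝ (Set.range w)).map J.toLinearMap = span ℝ (Set.range (J ∘ w)) := by
    rw [map_span, Set.range_comp]; rfl
  obtain ⟨x, ⟨hxv, hxw⟩, hx0⟩ := exists_mem_inf_ne_zero_of_finrank_lt
    (U := span ℝ (Set.range v)) (W := (span ℝ (Set.range w)).map J.toLinearMap) (by
      rwa [hJw, finrank_span_eq_card hv.linearIndependent,
        finrank_span_eq_card (hw.comp_linearIsometry J).linearIndependent])
  obtain ⟨y, hyw, rfl⟩ := hxw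
  have hy : 0 < ‖y‖ ^ 2 := by
    refine pow_pos (norm_pos_iff.2 fun hy => hx0 ?_) 2
    simp [hy]
  refine le_of_mul_le_mul_right ?_ hy
  calc b * ‖y‖ ^ 2 ≤ ⟪S y, y⟫ := hw.le_inner_map_self_of_mem_span hwS hb hyw
    _ = ⟪T (J y), J y⟫ := hJ y
    _ ≤ a * ‖J y‖ ^ 2 := hv.inner_map_self_le_of_mem_span hvT ha hxv
    _ = a * ‖y‖ ^ 2 := by rw [J.norm_map]

end RayleighQuotient

noncomputable def EuclideanSpace.insertNthZero {𝕜 : Type*} [RCLike 𝕜] {n : ℕ}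
    (k : Fin (n + 1)) : EuclideanSpace 𝕜 (Fin n) →ₗᵢ[𝕜] EuclideanSpace 𝕜 (Fin (n + 1)) where
  toFun y := WithLp.toLp 2 (Fin.insertNth k 0 y.ofLp)
  map_add' y z := by
    ext i; cases i using Fin.succAboveCases k <;> simp
  map_smul' c y := by
    ext i; cases i using Fin.succAboveCases k <;> simp
  norm_map' y := by
    simp [EuclideanSpace.norm_eq, Fin.sum_univ_succAbove _ k]

theorem Matrix.mulVec_insertNth_zero_succAbove {R : Type*} [NonUnitalNonAssocSemiring R] {n : ℕ}
    (A : Matrix (Fin (n + 1)) (Fin (n + 1)) R) (k : Fin (n + 1)) (y : Fin n → R) (j : Fin n) :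
    (A *ᵥ Fin.insertNth k 0 y) (k.succAbove j) = (A.submatrix k.succAbove k.succAbove *ᵥ y) j := by
  simp [mulVec, dotProduct, Fin.sum_univ_succAbove _ k]

theorem Matrix.inner_toEuclideanLin_insertNthZero {𝕜 : Type*} [RCLike 𝕜] {n : ℕ}
    (A : Matrix (Fin (n + 1)) (Fin (n + 1)) 𝕜) (k : Fin (n + 1))
    (y : EuclideanSpace 𝕜 (Fin n)) :
    inner 𝕜 (toEuclideanLin A (EuclideanSpace.insertNthZero k y))
        (EuclideanSpace.insertNthZero k y) =
      inner 𝕜 (toEuclideanLin (A.submatrix k.succAbove k.succAbove) y) y := by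
  simp [EuclideanSpace.inner_eq_star_dotProduct, dotProduct, Fin.sum_univ_succAbove _ k,
    toLpLin_apply, EuclideanSpace.insertNthZero, mulVec_insertNth_zero_succAbove]

theorem Matrix.IsHermitian.toEuclideanLin_eigenvectorBasis {𝕜 : Type*} [RCLike 𝕜]
    {m : Type*} [Fintype m] [DecidableEq m] {A : Matrix m m 𝕜} (hA : A.IsHermitian) (i : m) :
    toEuclideanLin A (hA.eigenvectorBasis i) = hA.eigenvalues i • hA.eigenvectorBasis i := by
  rw [toLpLin_apply, hA.mulVec_eigenvectorBasis, WithLp.toLp_smul, WithLp.toLp_ofLp]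

section Compression

open RealInnerProductSpace

variable {m m' : Type*} [Fintype m] [DecidableEq m] [Fintype m'] [DecidableEq m']
  {A : Matrix m m ℝ} {B : Matrix m' m' ℝ}

theorem Matrix.IsHermitian.le_of_compression (hA : A.IsHermitian) (hB : B.IsHermitian)
    (J : EuclideanSpace ℝ m' →ₗᵢ[ℝ] EuclideanSpace ℝ m)
    (hJ : ∀ y, ⟪toEuclideanLin B y, y⟫ = ⟪toEuclideanLin A (J y), J y⟫) {a b : ℝ}
    (h : Fintype.card m < Fintype.card {i // hA.eigenvalues i ≤ a} +
      Fintype.card {j // b ≤ hB.eigenvalues j}) : b ≤ a :=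
  J.le_of_finrank_lt_card_add_card hJ
    (v := fun i : {i // hA.eigenvalues i ≤ a} => hA.eigenvectorBasis i)
    (w := fun j : {j // b ≤ hB.eigenvalues j} => hB.eigenvectorBasis j)
    (hA.eigenvectorBasis.orthonormal.comp _ Subtype.val_injective)
    (hB.eigenvectorBasis.orthonormal.comp _ Subtype.val_injective)
    (fun i => hA.toEuclideanLin_eigenvectorBasis i)
    (fun j => hB.toEuclideanLin_eigenvectorBasis j)
    (fun i => i.2) (fun j => j.2) (by rwa [finrank_euclideanSpace])

theorem Matrix.IsHermitian.ge_of_compression (hA : A.IsHermitian) (hB : B.IsHermitian)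
    (J : EuclideanSpace ℝ m' →ₗᵢ[ℝ] EuclideanSpace ℝ m)
    (hJ : ∀ y, ⟪toEuclideanLin B y, y⟫ = ⟪toEuclideanLin A (J y), J y⟫) {a b : ℝ}
    (h : Fintype.card m < Fintype.card {i // a ≤ hA.eigenvalues i} +
      Fintype.card {j // hB.eigenvalues j ≤ b}) : a ≤ b :=
  neg_le_neg_iff.1 <| J.le_of_finrank_lt_card_add_card
    (T := -toEuclideanLin A) (S := -toEuclideanLin B) (by simpa using hJ)
    (v := fun i : {i // a ≤ hA.eigenvalues i} => hA.eigenvectorBasis i)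
    (w := fun j : {j // hB.eigenvalues j ≤ b} => hB.eigenvectorBasis j)
    (hA.eigenvectorBasis.orthonormal.comp _ Subtype.val_injective)
    (hB.eigenvectorBasis.orthonormal.comp _ Subtype.val_injective)
    (t := fun i => -hA.eigenvalues i) (s := fun j => -hB.eigenvalues j)
    (fun i => by simp [hA.toEuclideanLin_eigenvectorBasis])
    (fun j => by simp [hB.toEuclideanLin_eigenvectorBasis])
    (fun i => neg_le_neg i.2) (fun j => neg_le_neg j.2) (by rwa [finrank_euclideanSpace])

end Compression

theorem Fintype.card_subtype_comp_eq_of_prod_X_sub_C_eq {R : Type*} [CommRing R] [IsDomain R]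
    {ι κ : Type*} [Fintype ι] [Fintype κ] {f : ι → R} {g : κ → R}
    (h : ∏ i, (X - C (f i)) = ∏ j, (X - C (g j))) (P : R → Prop) [DecidablePred P] :
    Fintype.card {i // P (f i)} = Fintype.card {j // P (g j)} := by
  have hroots := congrArg roots h
  simp only [roots_prod _ _ (prod_ne_zero_iff.2 fun i _ => X_sub_C_ne_zero _), roots_X_sub_C,
    Multiset.bind_singleton] at hroots
  have hcount := congrArg (Multiset.countP P) hroots
  rw [Multiset.countP_map, Multiset.countP_map] at hcount
  simpa [Fintype.card_subtype, Finset.card_def, Finset.filter_val] using hcount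

theorem Monotone.le_card_subtype_le {α : Type*} [LinearOrder α] {m : ℕ} {f : Fin m → α}
    (hf : Monotone f) (q : Fin m) : (q : ℕ) + 1 ≤ Fintype.card {i // f i ≤ f q} := by
  rw [Fintype.card_subtype, ← Fin.card_Iic]
  exact card_le_card fun i hi => by simpa using hf (Finset.mem_Iic.1 hi)

theorem Monotone.le_card_subtype_ge {α : Type*} [LinearOrder α] {m : ℕ} {f : Fin m → α}
    (hf : Monotone f) (q : Fin m) : m - q ≤ Fintype.card {i // f q ≤ f i} := by
  rw [Fintype.card_subtype, ← Fin.card_Ici]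
  exact card_le_card fun i hi => by simpa using hf (Finset.mem_Ici.1 hi)

open RealInnerProductSpace in
theorem cauchy_interlace_symmetric_general (n : ℕ)
    (A : Matrix (Fin (n + 1)) (Fin (n + 1)) ℝ) (hA : A.IsSymm)
    (k : Fin (n + 1))
    (B : Matrix (Fin n) (Fin n) ℝ)
    (hB : B = A.submatrix k.succAbove k.succAbove)
    (lam : Fin (n + 1) → ℝ) (hlam : Monotone lam)
    (hlamEig : A.charpoly = ∏ i, (X - C (lam i)))
    (mu : Fin n → ℝ) (hmu : Monotone mu)
    (hmuEig : B.charpoly = ∏ i, (X - C (mu i))) :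
    ∀ p : Fin n, lam p.castSucc ≤ mu p ∧ mu p ≤ lam p.succ := by
  have hAH : A.IsHermitian := isHermitian_iff_isSymm.2 hA
  have hBH : B.IsHermitian := hB ▸ hAH.submatrix k.succAbove
  have hJ (y : EuclideanSpace ℝ (Fin n)) : ⟪toEuclideanLin B y, y⟫ =
      ⟪toEuclideanLin A (EuclideanSpace.insertNthZero k y), EuclideanSpace.insertNthZero k y⟫ := by
    rw [hB, inner_toEuclideanLin_insertNthZero]
  have hcardA := Fintype.card_subtype_comp_eq_of_prod_X_sub_C_eq (f := hAH.eigenvalues)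
    (by simpa using hAH.charpoly_eq.symm.trans hlamEig)
  have hcardB := Fintype.card_subtype_comp_eq_of_prod_X_sub_C_eq (f := hBH.eigenvalues)
    (by simpa using hBH.charpoly_eq.symm.trans hmuEig)
  intro p
  have hp := p.isLt
  constructor
  · refine hAH.ge_of_compression hBH _ hJ ?_
    rw [hcardA (lam p.castSucc ≤ ·), hcardB (· ≤ mu p), Fintype.card_fin]
    have hl := hlam.le_card_subtype_ge p.castSucc
    have hm := hmu.le_card_subtype_le p
    rw [Fin.val_castSucc] at hl
    omega
  · refine hAH.le_of_compression hBH _ hJ ?_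
    rw [hcardA (· ≤ lam p.succ), hcardB (mu p ≤ ·), Fintype.card_fin]
    have hl := hlam.le_card_subtype_le p.succ
    have hm := hmu.le_card_subtype_ge p
    rw [Fin.val_succ] at hl
    omega

/-- **Cauchy interlace theorem.** If `B` is obtained from a real symmetric
`(n+1) × (n+1)` matrix `A` (with `n + 1 ≥ 2`) by deleting row `k` and column `k`,
and `lam`, `mu` list the eigenvalues of `A` and `B` in increasing order with
multiplicity (i.e. they are monotone and the characteristic polynomials split
accordingly), then the eigenvalues of `B` interlace those of `A`. -/
theorem cauchy_interlace_symmetric (n : ℕ) (hn : 1 ≤ n)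
    (A : Matrix (Fin (n + 1)) (Fin (n + 1)) ℝ) (hA : A.IsSymm)
    (k : Fin (n + 1))
    (B : Matrix (Fin n) (Fin n) ℝ)
    (hB : B = A.submatrix k.succAbove k.succAbove)
    (lam : Fin (n + 1) → ℝ) (hlam : Monotone lam)
    (hlamEig : A.charpoly = ∏ i, (X - C (lam i)))
    (mu : Fin n → ℝ) (hmu : Monotone mu)
    (hmuEig : B.charpoly = ∏ i, (X - C (mu i))) :
    ∀ p : Fin n, lam p.castSucc ≤ mu p ∧ mu p ≤ lam p.succ :=
  cauchy_interlace_symmetric_general n A hA k B hB lam hlam hlamEig mu hmu hmuEig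
end

section
/- Let A = (a_ij) be an m×m real symmetrizable matrix with m ≥ 2, let λ be any real number, and let k, l ∈ {1,...,m} with k ≠ l. Denote by M^{l,k} the (m−1)×(m−1) matrix obtained from A − λI_m by deleting row l and column k, and by M^{k,l} the matrix obtained from A − λI_m by deleting row k and column l. Then a_{lk} · det(M^{l,k}) = a_{kl} · det(M^{k,l}). -/
/-- A real square matrix is *symmetrizable* if some diagonal matrix with
strictly positive entries makes it symmetric by left multiplication. -/
def Matrix.Symmetrizable {n : Type*} [Fintype n] [DecidableEq n]
    (A : Matrix n n ℝ) : Prop :=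
  ∃ d : n → ℝ, (∀ i, 0 < d i) ∧ (Matrix.diagonal d * A).IsSymm

/-- For a symmetrizable matrix `A` of size `n + 1 ≥ 2`, any real `λ` and
indices `k ≠ l`, we have `a_{lk} · det M^{l,k} = a_{kl} · det M^{k,l}` where
`M = A - λ I` and `M^{i,j}` is obtained from `M` by deleting row `i` and
column `j`. -/
theorem symmetrizable_minor_identity (n : ℕ) (hn : 1 ≤ n)
    (A : Matrix (Fin (n + 1)) (Fin (n + 1)) ℝ) (hA : A.Symmetrizable)
    (lam : ℝ) (k l : Fin (n + 1)) (hkl : k ≠ l)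
    (M : Matrix (Fin (n + 1)) (Fin (n + 1)) ℝ)
    (hM : M = A - lam • (1 : Matrix (Fin (n + 1)) (Fin (n + 1)) ℝ)) :
    A l k * (M.submatrix l.succAbove k.succAbove).det =
      A k l * (M.submatrix k.succAbove l.succAbove).det := by
  obtain ⟨d, hd, hsym⟩ := hA
  -- symmetry of D·A entrywise
  have hAsym : ∀ i j : Fin (n + 1), d i * A i j = d j * A j i := by
    intro i j
    have h := congrFun (congrFun hsym j) i
    simpa [Matrix.transpose_apply, Matrix.diagonal_mul] using h
  -- symmetry of D·M entrywise
  have hNsym : ∀ i j : Fin (n + 1), d i * M i j = d j * M j i := by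
    intro i j
    by_cases h : i = j
    · subst h; rfl
    · have := hAsym i j
      simp [hM, Matrix.sub_apply, Matrix.one_apply, h, Ne.symm h, mul_sub]
      simpa using this
  set N : Matrix (Fin (n + 1)) (Fin (n + 1)) ℝ :=
    Matrix.of fun i j => d i * M i j with hN
  -- submatrix of N as diagonal * submatrix of M
  have hsub : ∀ p q : Fin (n + 1),
      N.submatrix p.succAbove q.succAbove =
        Matrix.diagonal (fun i => d (p.succAbove i)) *
          M.submatrix p.succAbove q.succAbove := by
    intro p q
    ext i j
    simp [hN, Matrix.diagonal_mul]
  have hdetN : ∀ p q : Fin (n + 1),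
      (N.submatrix p.succAbove q.succAbove).det =
        (∏ i, d (p.succAbove i)) * (M.submatrix p.succAbove q.succAbove).det := by
    intro p q
    rw [hsub, Matrix.det_mul, Matrix.det_diagonal]
  -- the two minors of N are transposes
  have htr : N.submatrix l.succAbove k.succAbove =
      Matrix.transpose (N.submatrix k.succAbove l.succAbove) := by
    ext i j
    simp only [Matrix.submatrix_apply, Matrix.transpose_apply, hN, Matrix.of_apply]
    exact hNsym _ _
  have hdet : (∏ i, d (l.succAbove i)) * (M.submatrix l.succAbove k.succAbove).det =
      (∏ i, d (k.succAbove i)) * (M.submatrix k.succAbove l.succAbove).det := by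
    rw [← hdetN, ← hdetN, htr, Matrix.det_transpose]
  have hPl : ∏ i, d i = d l * ∏ i, d (l.succAbove i) := Fin.prod_univ_succAbove d l
  have hPk : ∏ i, d i = d k * ∏ i, d (k.succAbove i) := Fin.prod_univ_succAbove d k
  have hP0 : (∏ i, d i) ≠ 0 := Finset.prod_ne_zero_iff.2 fun i _ => (hd i).ne'
  apply mul_left_cancel₀ hP0
  calc (∏ i, d i) * (A l k * (M.submatrix l.succAbove k.succAbove).det)
      = (d l * A l k) * ((∏ i, d (l.succAbove i)) *
          (M.submatrix l.succAbove k.succAbove).det) := by rw [hPl]; ring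
    _ = (d k * A k l) * ((∏ i, d (k.succAbove i)) *
          (M.submatrix k.succAbove l.succAbove).det) := by rw [hAsym, hdet]
    _ = (∏ i, d i) * (A k l * (M.submatrix k.succAbove l.succAbove).det) := by
          rw [hPk]; ring
end

section
/- Let A = (a_ij) be an m×m real matrix with m ≥ 1. Then A is symmetrizable if and only if A is sign symmetric and for every k with 3 ≤ k ≤ m and every sequence of pairwise distinct indices i_1, i_2, ..., i_k in {1,...,m}, one has a_{i_1,i_2}·a_{i_2,i_3}···a_{i_{k-1},i_k}·a_{i_k,i_1} = a_{i_2,i_1}·a_{i_3,i_2}···a_{i_k,i_{k-1}}·a_{i_1,i_k}. -/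
/-- A real square matrix is *sign symmetric* if, for all `i ≠ j`, either
`a_ij = a_ji = 0` or `a_ij · a_ji > 0`. -/
def Matrix.SignSymmetric {n : Type*} (A : Matrix n n ℝ) : Prop :=
  ∀ i j : n, i ≠ j → (A i j = 0 ∧ A j i = 0) ∨ 0 < A i j * A j i

open Finset

theorem Fin.prod_finRotate_cons {α M : Type*} [CommMonoid M] (F : α → α → M) (x : α) {t : ℕ}
    (g : Fin (t + 1) → α) :
    ∏ i : Fin (t + 2), F ((Fin.cons x g : Fin (t + 2) → α) i)
        ((Fin.cons x g : Fin (t + 2) → α) (finRotate (t + 2) i)) =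
      F x (g 0) * (∏ i : Fin t, F (g i.castSucc) (g i.succ)) * F (g (Fin.last t)) x := by
  have h : ∀ i : Fin t, finRotate (t + 2) i.castSucc.succ = i.succ.succ := fun i => by
    rw [finRotate_apply, Fin.succ_castSucc, Fin.coeSucc_eq_succ]
  rw [Fin.prod_univ_succ, Fin.prod_univ_castSucc]
  simp [finRotate_apply, h, mul_assoc]

theorem SimpleGraph.exists_pos_eq_of_reachable {V : Type*} (G : SimpleGraph V) (r : V → ℝ)
    (hr : ∀ j j', G.Reachable j j' → 0 < r j → 0 < r j' → r j = r j') :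
    ∃ c : V → ℝ, (∀ i, 0 < c i) ∧ (∀ i j, G.Adj i j → c i = c j) ∧
      ∀ j, 0 < r j → c j = r j := by
  classical
  let c : V → ℝ := fun i =>
    if h : ∃ j, G.Reachable i j ∧ 0 < r j then r h.choose else 1
  have hc : ∀ i j, G.Reachable i j → 0 < r j → c i = r j := fun i j hij hj => by
    have h : ∃ j, G.Reachable i j ∧ 0 < r j := ⟨j, hij, hj⟩
    obtain ⟨hi, hpos⟩ := h.choose_spec
    simp only [c, dif_pos h]
    exact hr _ _ (hi.symm.trans hij) hpos hj
  refine ⟨c, fun i => ?_, fun i j hij => ?_, fun j hj => hc j j .rfl hj⟩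
  · by_cases h : ∃ j, G.Reachable i j ∧ 0 < r j
    · obtain ⟨j, hij, hj⟩ := h
      exact hc i j hij hj ▸ hj
    · simp only [c, dif_neg h, zero_lt_one]
  · by_cases h : ∃ k, G.Reachable j k ∧ 0 < r k
    · obtain ⟨k, hjk, hk⟩ := h
      rw [hc i k (hij.reachable.trans hjk) hk, hc j k hjk hk]
    · have h' : ¬∃ k, G.Reachable i k ∧ 0 < r k :=
        fun ⟨k, hik, hk⟩ => h ⟨k, hij.reachable.symm.trans hik, hk⟩
      simp only [c, dif_neg h, dif_neg h']

namespace Matrix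

variable {ι : Type*}

def CycleSymmetric (A : Matrix ι ι ℝ) : Prop :=
  ∀ k : ℕ, 3 ≤ k → ∀ f : Fin k → ι, Function.Injective f →
    ∏ i : Fin k, A (f i) (f (finRotate k i)) = ∏ i : Fin k, A (f (finRotate k i)) (f i)

def nonzeroGraph (A : Matrix ι ι ℝ) (s : Set ι) : SimpleGraph ι where
  Adj i j := i ≠ j ∧ i ∈ s ∧ j ∈ s ∧ A i j ≠ 0 ∧ A j i ≠ 0
  symm := ⟨fun _ _ h => ⟨h.1.symm, h.2.2.1, h.2.1, h.2.2.2.2, h.2.2.2.1⟩⟩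
  loopless := ⟨fun _ h => h.1 rfl⟩

theorem symmetrizable_iff [Fintype ι] [DecidableEq ι] {A : Matrix ι ι ℝ} :
    A.Symmetrizable ↔ ∃ d : ι → ℝ, (∀ i, 0 < d i) ∧ ∀ i j, d i * A i j = d j * A j i := by
  refine exists_congr fun d => and_congr_right fun _ => ?_
  simp only [IsSymm, ← Matrix.ext_iff, transpose_apply, diagonal_mul]
  exact forall_comm

section Necessity

variable {A : Matrix ι ι ℝ} {d : ι → ℝ}

theorem prod_perm_eq_of_mul_eq {κ : Type*} [Fintype κ] (hd0 : ∀ i, d i ≠ 0)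
    (hd : ∀ i j, d i * A i j = d j * A j i) (σ : Equiv.Perm κ) (f : κ → ι) :
    ∏ i, A (f i) (f (σ i)) = ∏ i, A (f (σ i)) (f i) := by
  apply mul_left_cancel₀ (prod_ne_zero_iff.2 fun i _ => hd0 (f i) : ∏ i, d (f i) ≠ 0)
  calc (∏ i, d (f i)) * ∏ i, A (f i) (f (σ i))
      = ∏ i, d (f i) * A (f i) (f (σ i)) := prod_mul_distrib.symm
    _ = ∏ i, d (f (σ i)) * A (f (σ i)) (f i) := prod_congr rfl fun i _ => hd _ _
    _ = (∏ i, d (f i)) * ∏ i, A (f (σ i)) (f i) := by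
      rw [prod_mul_distrib, Equiv.prod_comp σ fun i => d (f i)]

theorem signSymmetric_of_mul_eq (hd0 : ∀ i, 0 < d i) (hd : ∀ i j, d i * A i j = d j * A j i) :
    A.SignSymmetric := by
  intro i j _
  by_cases h : A i j = 0
  · have := hd i j
    rw [h, mul_zero, zero_eq_mul] at this
    exact .inl ⟨h, this.resolve_left (hd0 j).ne'⟩
  · have key : d j * (A i j * A j i) = d i * A i j ^ 2 := by
      linear_combination A i j * (hd i j).symm
    have hpos : 0 < d j * (A i j * A j i) := by
      rw [key]; exact mul_pos (hd0 i) (sq_pos_of_ne_zero h)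
    exact .inr (pos_of_mul_pos_right hpos (hd0 j).le)

theorem Symmetrizable.signSymmetric [Fintype ι] [DecidableEq ι] (h : A.Symmetrizable) :
    A.SignSymmetric :=
  let ⟨_, hd0, hd⟩ := symmetrizable_iff.1 h
  signSymmetric_of_mul_eq hd0 hd

theorem Symmetrizable.cycleSymmetric [Fintype ι] [DecidableEq ι] (h : A.Symmetrizable) :
    A.CycleSymmetric :=
  let ⟨_, hd0, hd⟩ := symmetrizable_iff.1 h
  fun k _ f _ => prod_perm_eq_of_mul_eq (fun i => (hd0 i).ne') hd (finRotate k) f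

end Necessity

section Sufficiency

variable {A : Matrix ι ι ℝ} {d : ι → ℝ}

theorem mul_prod_eq_of_mul_eq {t : ℕ} (g : Fin (t + 1) → ι) (hd0 : ∀ i, d i ≠ 0)
    (hd : ∀ i : Fin t, d (g i.castSucc) * A (g i.castSucc) (g i.succ) =
      d (g i.succ) * A (g i.succ) (g i.castSucc)) :
    d (g 0) * ∏ i : Fin t, A (g i.castSucc) (g i.succ) =
      d (g (Fin.last t)) * ∏ i : Fin t, A (g i.succ) (g i.castSucc) := by
  apply mul_left_cancel₀
    (prod_ne_zero_iff.2 fun i _ => hd0 _ : ∏ i : Fin t, d (g i.castSucc) ≠ 0)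
  calc (∏ i : Fin t, d (g i.castSucc)) * (d (g 0) * ∏ i : Fin t, A (g i.castSucc) (g i.succ))
      = d (g 0) * ∏ i : Fin t, d (g i.castSucc) * A (g i.castSucc) (g i.succ) := by
        rw [prod_mul_distrib]; ring
    _ = d (g 0) * ∏ i : Fin t, d (g i.succ) * A (g i.succ) (g i.castSucc) := by
        rw [prod_congr rfl fun i _ => hd i]
    _ = (∏ i, d (g i)) * ∏ i : Fin t, A (g i.succ) (g i.castSucc) := by
        rw [prod_mul_distrib, Fin.prod_univ_succ (fun i => d (g i))]; ring
    _ = _ := by rw [Fin.prod_univ_castSucc]; ring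

theorem CycleSymmetric.mul_mul_eq_of_injective (hC : A.CycleSymmetric) (hd0 : ∀ i, d i ≠ 0)
    {t : ℕ} (ht : 1 ≤ t) {v : ι} {g : Fin (t + 1) → ι} (hg : Function.Injective g)
    (hv : ∀ i, g i ≠ v) (hA : ∀ i : Fin t, A (g i.succ) (g i.castSucc) ≠ 0)
    (hd : ∀ i : Fin t, d (g i.castSucc) * A (g i.castSucc) (g i.succ) =
      d (g i.succ) * A (g i.succ) (g i.castSucc)) :
    A v (g 0) * A (g (Fin.last t)) v * d (g (Fin.last t)) =
      A v (g (Fin.last t)) * A (g 0) v * d (g 0) := by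
  have hcycle := hC (t + 2) (by omega) _ (Fin.cons_injective_iff.2 ⟨fun ⟨i, hi⟩ => hv i hi, hg⟩)
  rw [Fin.prod_finRotate_cons (fun a b => A a b), Fin.prod_finRotate_cons (fun a b => A b a)]
    at hcycle
  have hpath := mul_prod_eq_of_mul_eq g hd0 hd
  apply mul_left_cancel₀
    (prod_ne_zero_iff.2 fun i _ => hA i : ∏ i : Fin t, A (g i.succ) (g i.castSucc) ≠ 0)
  linear_combination d (g 0) * hcycle - A v (g 0) * A (g (Fin.last t)) v * hpath

theorem eq_of_reachable_nonzeroGraph {s : Set ι} {u w : ι}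
    (h : (A.nonzeroGraph s).Reachable u w) (hu : u ∉ s) : u = w := by
  obtain ⟨p⟩ := h
  cases p with
  | nil => rfl
  | cons hadj _ => exact absurd hadj.2.1 hu

theorem CycleSymmetric.mul_mul_eq_of_reachable (hC : A.CycleSymmetric) {s : Set ι} {v : ι}
    (hv : v ∉ s) (hd0 : ∀ i, d i ≠ 0) (hd : ∀ i ∈ s, ∀ j ∈ s, d i * A i j = d j * A j i)
    {j j' : ι} (h : (A.nonzeroGraph s).Reachable j j') :
    A v j * A j' v * d j' = A v j' * A j v * d j := by
  classical
  obtain rfl | hne := eq_or_ne j j'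
  · ring
  obtain ⟨p, hp⟩ := h.some.toPath
  have ht : 1 ≤ p.length := Nat.one_le_iff_ne_zero.2 fun h0 => hne (p.eq_of_length_eq_zero h0)
  let g : Fin (p.length + 1) → ι := fun i => p.getVert i
  have hmem : ∀ i, g i ∈ s := fun i => by
    by_contra hi
    exact hne ((eq_of_reachable_nonzeroGraph (p.take i).reachable.symm hi).symm.trans
      (eq_of_reachable_nonzeroGraph (p.drop i).reachable hi))
  have hadj : ∀ i : Fin p.length, (A.nonzeroGraph s).Adj (g i.castSucc) (g i.succ) :=
    fun i => p.adj_getVert_succ i.isLt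
  have hg : Function.Injective g := fun a b hab =>
    Fin.ext (hp.getVert_injOn (Set.mem_ofPred.2 a.is_le) (Set.mem_ofPred.2 b.is_le) hab)
  simpa [g] using hC.mul_mul_eq_of_injective hd0 ht hg
    (fun i => ne_of_mem_of_not_mem (hmem i) hv) (fun i => (hadj i).2.2.2.2)
    (fun i => hd _ (hmem _) _ (hmem _))

theorem mul_mul_eq_of_adj_eq (hS : A.SignSymmetric) {s : Set ι} {c : ι → ℝ}
    (hc : ∀ i j, (A.nonzeroGraph s).Adj i j → c i = c j)
    (hd : ∀ i ∈ s, ∀ j ∈ s, d i * A i j = d j * A j i) {i j : ι} (hi : i ∈ s) (hj : j ∈ s) :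
    c i * d i * A i j = c j * d j * A j i := by
  obtain rfl | hij := eq_or_ne i j
  · rfl
  rcases hS i j hij with ⟨h1, h2⟩ | hpos
  · simp [h1, h2]
  · have hadj : (A.nonzeroGraph s).Adj i j :=
      ⟨hij, hi, hj, left_ne_zero_of_mul hpos.ne', right_ne_zero_of_mul hpos.ne'⟩
    rw [hc i j hadj, mul_assoc, mul_assoc, hd i hi j hj]

theorem exists_mul_eq_insert [DecidableEq ι] (hS : A.SignSymmetric) (hC : A.CycleSymmetric)
    {s : Finset ι} {v : ι} (hv : v ∉ s) (hd0 : ∀ i, 0 < d i)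
    (hd : ∀ i ∈ s, ∀ j ∈ s, d i * A i j = d j * A j i) :
    ∃ d' : ι → ℝ, (∀ i, 0 < d' i) ∧
      ∀ i ∈ insert v s, ∀ j ∈ insert v s, d' i * A i j = d' j * A j i := by
  obtain ⟨c, hc0, hc_adj, hc_eq⟩ := (A.nonzeroGraph s).exists_pos_eq_of_reachable
    (fun j => A v j / A j v / d j) fun j j' h hj hj' => by
      have hjv : A j v ≠ 0 := fun h0 => by simp [h0] at hj
      have hj'v : A j' v ≠ 0 := fun h0 => by simp [h0] at hj'
      rw [div_div, div_div, div_eq_div_iff (mul_ne_zero hjv (hd0 j).ne')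
        (mul_ne_zero hj'v (hd0 j').ne')]
      linear_combination hC.mul_mul_eq_of_reachable hv (fun i => (hd0 i).ne') hd h
  have hrow : ∀ j ∈ s, A v j = c j * d j * A j v := by
    intro j hj
    rcases hS v j (ne_of_mem_of_not_mem hj hv).symm with ⟨h1, h2⟩ | hpos
    · simp [h1, h2]
    · have hr : 0 < A v j / A j v / d j :=
        div_pos (div_pos_iff.2 (mul_pos_iff.1 hpos)) (hd0 j)
      have hjv : A j v ≠ 0 := right_ne_zero_of_mul hpos.ne'
      rw [hc_eq j hr]
      field_simp [(hd0 j).ne']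
  have hs : ∀ i ∈ s, Function.update (fun i => c i * d i) v 1 i = c i * d i :=
    fun i hi => Function.update_of_ne (ne_of_mem_of_not_mem hi hv) _ _
  refine ⟨Function.update (fun i => c i * d i) v 1, fun i => ?_, ?_⟩
  · rcases eq_or_ne i v with rfl | hi
    · simp
    · simpa [hi] using mul_pos (hc0 i) (hd0 i)
  · simp only [mem_insert]
    rintro i (rfl | hi) j (rfl | hj)
    · rfl
    · rw [Function.update_self, hs j hj, one_mul, hrow j hj]
    · rw [Function.update_self, hs i hi, one_mul, hrow i hi]
    · rw [hs i hi, hs j hj]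
      exact mul_mul_eq_of_adj_eq hS hc_adj hd hi hj

theorem SignSymmetric.symmetrizable [Fintype ι] [DecidableEq ι] (hS : A.SignSymmetric)
    (hC : A.CycleSymmetric) : A.Symmetrizable := by
  suffices ∀ s : Finset ι, ∃ d : ι → ℝ, (∀ i, 0 < d i) ∧
      ∀ i ∈ s, ∀ j ∈ s, d i * A i j = d j * A j i by
    obtain ⟨d, hd0, hd⟩ := this univ
    exact symmetrizable_iff.2 ⟨d, hd0, fun i j => hd i (mem_univ i) j (mem_univ j)⟩
  intro s
  induction s using Finset.induction_on with
  | empty => exact ⟨1, fun _ => one_pos, by simp⟩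
  | insert v s hv ih =>
    obtain ⟨d, hd0, hd⟩ := ih
    exact exists_mul_eq_insert hS hC hv hd0 hd

end Sufficiency

end Matrix

theorem symmetrizable_iff_cycles_general (m : ℕ) (A : Matrix (Fin m) (Fin m) ℝ) :
    A.Symmetrizable ↔
      (A.SignSymmetric ∧
        ∀ k : ℕ, 3 ≤ k → k ≤ m → ∀ f : Fin k → Fin m, Function.Injective f →
          ∏ i : Fin k, A (f i) (f (finRotate k i)) =
            ∏ i : Fin k, A (f (finRotate k i)) (f i)) := by
  have hbounded : (∀ k : ℕ, 3 ≤ k → k ≤ m → ∀ f : Fin k → Fin m, Function.Injective f →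
      ∏ i : Fin k, A (f i) (f (finRotate k i)) = ∏ i : Fin k, A (f (finRotate k i)) (f i)) ↔
      A.CycleSymmetric :=
    forall_congr' fun k =>
      ⟨fun h h3 f hf => h h3 (by simpa using Fintype.card_le_of_injective f hf) f hf,
        fun h h3 _ => h h3⟩
  rw [hbounded]
  exact ⟨fun h => ⟨h.signSymmetric, h.cycleSymmetric⟩, fun ⟨hS, hC⟩ => hS.symmetrizable hC⟩

/-- A real `m × m` matrix is symmetrizable if and only if it is sign symmetric
and for every `3 ≤ k ≤ m` and every injective `k`-tuple of indices
`i_1, …, i_k`, the product of the entries around the cycle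
`i_1 → i_2 → ⋯ → i_k → i_1` equals the product around the reversed cycle:
`a_{i_1 i_2} ⋯ a_{i_k i_1} = a_{i_2 i_1} ⋯ a_{i_1 i_k}`. -/
theorem symmetrizable_iff_cycles (m : ℕ) (hm : 1 ≤ m)
    (A : Matrix (Fin m) (Fin m) ℝ) :
    A.Symmetrizable ↔
      (A.SignSymmetric ∧
        ∀ k : ℕ, 3 ≤ k → k ≤ m → ∀ f : Fin k → Fin m, Function.Injective f →
          ∏ i : Fin k, A (f i) (f (finRotate k i)) =
            ∏ i : Fin k, A (f (finRotate k i)) (f i)) :=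
  symmetrizable_iff_cycles_general m A
end

section
/- Let B be an m×m real symmetric matrix with m ≥ 2 and det B = 0, and let k, l ∈ {1,...,m} with k ≠ l. Denote by B_k and B_l the (m−1)×(m−1) principal submatrices of B obtained by deleting row k and column k, respectively row l and column l, and by B^{l,k} the matrix obtained from B by deleting row l and column k. Then det(B_k) · det(B_l) = (det(B^{l,k}))^2; in particular, the product of any two principal minors of B of order m−1 is nonnegative. -/
open Matrix

/-- If `det A = 0`, every `2 × 2` minor of the adjugate of `A` vanishes
(the adjugate has rank at most one). -/
lemma adjugate_two_minor_eq_zero {n : ℕ} (A : Matrix (Fin (n + 1)) (Fin (n + 1)) ℝ)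
    (hdet : A.det = 0) (i j p q : Fin (n + 1)) :
    adjugate A i p * adjugate A j q = adjugate A i q * adjugate A j p := by
  by_cases h0 : adjugate A = 0
  · simp [h0]
  -- pick a nonzero entry of the adjugate
  obtain ⟨a, b, hab⟩ : ∃ a b, adjugate A a b ≠ 0 := by
    by_contra h
    push_neg at h
    exact h0 (by ext a b; exact h a b)
  set C := A.submatrix b.succAbove a.succAbove with hC
  have hCdet : C.det ≠ 0 := by
    rw [adjugate_fin_succ_eq_det_submatrix] at hab
    intro h
    rw [← hC] at hab
    simp [h] at hab
  have hCunit : IsUnit C.det := isUnit_iff_ne_zero.mpr hCdet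
  -- key: a kernel vector whose `a`-th coordinate is zero is zero
  have key : ∀ u : Fin (n + 1) → ℝ, A.mulVec u = 0 → u a = 0 → u = 0 := by
    intro u hu ha
    have hg : C.mulVec (u ∘ a.succAbove) = 0 := by
      ext i
      have hrow : A.mulVec u (b.succAbove i) = 0 := by rw [hu]; rfl
      rw [Matrix.mulVec, dotProduct] at hrow ⊢
      rw [Fin.sum_univ_succAbove (fun j => A (b.succAbove i) j * u j) a] at hrow
      simpa [hC, ha] using hrow
    have hgz : u ∘ a.succAbove = 0 := by
      have := congrArg (fun v => C⁻¹.mulVec v) hg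
      simpa [Matrix.mulVec_mulVec, Matrix.nonsing_inv_mul C hCunit] using this
    funext j
    rcases eq_or_ne j a with rfl | hja
    · exact ha
    · obtain ⟨i, rfl⟩ := Fin.exists_succAbove_eq hja
      exact congrFun hgz i
  -- the columns of the adjugate are in the kernel
  have hcol : ∀ p : Fin (n + 1), A.mulVec (fun i => adjugate A i p) = 0 := by
    intro p
    ext i
    have : (A * adjugate A) i p = 0 := by
      rw [Matrix.mul_adjugate, hdet]; simp
    simpa [Matrix.mul_apply, Matrix.mulVec, dotProduct] using this
  have main : ∀ u w : Fin (n + 1) → ℝ, A.mulVec u = 0 → A.mulVec w = 0 →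
      ∀ i j, u i * w j = u j * w i := by
    intro u w hu hw i j
    have hcomb : ∀ i, w a * u i = u a * w i := by
      have hv : A.mulVec (w a • u - u a • w) = 0 := by
        rw [Matrix.mulVec_sub, Matrix.mulVec_smul, Matrix.mulVec_smul, hu, hw]
        simp
      have hva : (w a • u - u a • w) a = 0 := by simp [mul_comm]
      have hz := key _ hv hva
      intro i
      have hi := congrFun hz i
      simp only [Pi.sub_apply, Pi.smul_apply, smul_eq_mul, Pi.zero_apply] at hi
      linarith
    by_cases hwa : w a = 0
    · have hz : w = 0 := key w hw hwa
      have hwi : ∀ i, w i = 0 := fun i => congrFun hz i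
      rw [hwi i, hwi j, mul_zero, mul_zero]
    · have e1 := hcomb i
      have e2 := hcomb j
      have h1 : u i * w j * w a = u j * w i * w a := by
        linear_combination w j * e1 - w i * e2
      exact mul_right_cancel₀ hwa h1
  exact (main _ _ (hcol p) (hcol q) i j).trans (mul_comm _ _)

/-- The main identity, for any pair of indices. -/
lemma symm_minor_product {n : ℕ} (B : Matrix (Fin (n + 1)) (Fin (n + 1)) ℝ)
    (hB : B.IsSymm) (hdet : B.det = 0) (k l : Fin (n + 1)) :
    (B.submatrix k.succAbove k.succAbove).det *
        (B.submatrix l.succAbove l.succAbove).det =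
      ((B.submatrix l.succAbove k.succAbove).det) ^ 2 := by
  have hsymm : adjugate B l k = adjugate B k l := by
    have := Matrix.adjugate_transpose B
    calc adjugate B l k = (adjugate B)ᵀ k l := rfl
      _ = adjugate Bᵀ k l := by rw [this]
      _ = adjugate B k l := by rw [hB.eq]
  have hmin := adjugate_two_minor_eq_zero B hdet k l k l
  have e1 : adjugate B k k = (B.submatrix k.succAbove k.succAbove).det := by
    rw [adjugate_fin_succ_eq_det_submatrix]
    simp [pow_add, ← mul_pow]
  have e2 : adjugate B l l = (B.submatrix l.succAbove l.succAbove).det := by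
    rw [adjugate_fin_succ_eq_det_submatrix]
    simp [pow_add, ← mul_pow]
  have e3 : adjugate B k l = (-1 : ℝ) ^ ((l : ℕ) + (k : ℕ)) *
      (B.submatrix l.succAbove k.succAbove).det :=
    adjugate_fin_succ_eq_det_submatrix B k l
  calc (B.submatrix k.succAbove k.succAbove).det *
        (B.submatrix l.succAbove l.succAbove).det
      = adjugate B k k * adjugate B l l := by rw [e1, e2]
    _ = adjugate B k l * adjugate B l k := hmin
    _ = adjugate B k l * adjugate B k l := by rw [hsymm]
    _ = ((B.submatrix l.succAbove k.succAbove).det) ^ 2 := by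
        have hsgn : ((-1:ℝ) ^ ((l:ℕ)+(k:ℕ))) * ((-1:ℝ) ^ ((l:ℕ)+(k:ℕ))) = 1 := by
          rw [← pow_add, show (l:ℕ)+(k:ℕ) + ((l:ℕ)+(k:ℕ)) = 2*((l:ℕ)+(k:ℕ)) by ring,
            pow_mul]
          norm_num
        rw [e3]
        calc ((-1:ℝ) ^ ((l:ℕ)+(k:ℕ)) * (B.submatrix l.succAbove k.succAbove).det) *
              ((-1:ℝ) ^ ((l:ℕ)+(k:ℕ)) * (B.submatrix l.succAbove k.succAbove).det)
            = (((-1:ℝ) ^ ((l:ℕ)+(k:ℕ))) * ((-1:ℝ) ^ ((l:ℕ)+(k:ℕ)))) *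
              ((B.submatrix l.succAbove k.succAbove).det ^ 2) := by ring
          _ = (B.submatrix l.succAbove k.succAbove).det ^ 2 := by rw [hsgn, one_mul]

/-- For a singular real symmetric matrix `B` of size `n + 1 ≥ 2` and indices
`k ≠ l`, the product of the principal minors `det B_k · det B_l` equals the
square of the "mixed" minor `det B^{l,k}` (delete row `l`, column `k`); in
particular the product of any two principal minors of order `n` of `B` is
nonnegative. -/
theorem symmetric_singular_minor_product (n : ℕ) (hn : 1 ≤ n)
    (B : Matrix (Fin (n + 1)) (Fin (n + 1)) ℝ) (hB : B.IsSymm)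
    (hdet : B.det = 0) (k l : Fin (n + 1)) (hkl : k ≠ l) :
    (B.submatrix k.succAbove k.succAbove).det *
        (B.submatrix l.succAbove l.succAbove).det =
      ((B.submatrix l.succAbove k.succAbove).det) ^ 2 ∧
    ∀ k' l' : Fin (n + 1),
      0 ≤ (B.submatrix k'.succAbove k'.succAbove).det *
            (B.submatrix l'.succAbove l'.succAbove).det := by
  refine ⟨symm_minor_product B hB hdet k l, fun k' l' => ?_⟩
  rw [symm_minor_product B hB hdet k' l']
  exact sq_nonneg _
end

section
/- Let A be an m×m real symmetric matrix with m ≥ 2, let λ_1 ≤ λ_2 ≤ ... ≤ λ_m be its eigenvalues listed with multiplicity, let k ∈ {1,...,m}, and let A_k be the (m−1)×(m−1) principal submatrix of A obtained by deleting row k and column k. Then for every p with 1 ≤ p ≤ m, one has (−1)^{p−1} · det(A_k − λ_p I_{m−1}) ≥ 0. -/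
open Polynomial

private lemma my_eval_charpoly {m : ℕ} (M : Matrix (Fin m) (Fin m) ℝ) (t : ℝ) :
    M.charpoly.eval t = (t • (1 : Matrix (Fin m) (Fin m) ℝ) - M).det := by
  rw [Matrix.charpoly, ← Polynomial.coe_evalRingHom, RingHom.map_det]
  congr 1
  ext i j
  by_cases h : i = j <;>
    simp [Matrix.charmatrix_apply, h, Matrix.smul_apply, Matrix.one_apply,
      Matrix.diagonal_apply]

private lemma my_count_eq {N : ℕ} {μ lam : Fin N → ℝ}
    (hms : Finset.univ.val.map μ = Finset.univ.val.map lam)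
    (q : ℝ → Prop) [DecidablePred q] :
    (Finset.univ.filter fun i => q (μ i)).card
      = (Finset.univ.filter fun i => q (lam i)).card := by
  have h := congrArg (Multiset.countP q) hms
  rw [Multiset.countP_map, Multiset.countP_map] at h
  exact h

private lemma my_sign_key {N : ℕ} (μ lam : Fin N → ℝ) (hmono : Monotone lam)
    (hms : Finset.univ.val.map μ = Finset.univ.val.map lam)
    (p j : Fin N) :
    0 ≤ (-1 : ℝ) ^ (p : ℕ) * ∏ i ∈ Finset.univ.erase j, (μ i - lam p) := by
  classical
  set x := lam p with hx
  by_cases h0 : ∃ i ∈ Finset.univ.erase j, μ i - x = 0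
  · obtain ⟨i, hi, hzero⟩ := h0
    rw [Finset.prod_eq_zero hi hzero, mul_zero]
  push_neg at h0
  have hne : ∀ i : Fin N, i ≠ j → μ i ≠ x := by
    intro i hij hc
    exact h0 i (Finset.mem_erase.mpr ⟨hij, Finset.mem_univ i⟩) (by rw [hc]; ring)
  have hclt := my_count_eq hms (fun y => y < x)
  have hceq := my_count_eq hms (fun y => y = x)
  have hμeq_le : (Finset.univ.filter fun i => μ i = x).card ≤ 1 := by
    apply Finset.card_le_one.mpr
    intro a ha b hb
    simp only [Finset.mem_filter] at ha hb
    by_contra hab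
    rcases eq_or_ne a j with rfl | h
    · exact hne b (fun hbj => hab (by rw [hbj])) hb.2
    · exact hne a h ha.2
  have hLpos : 1 ≤ (Finset.univ.filter fun i => lam i = x).card := by
    apply Finset.card_pos.mpr
    exact ⟨p, by simp [hx]⟩
  have hLone : (Finset.univ.filter fun i => lam i = x).card = 1 :=
    le_antisymm (hceq ▸ hμeq_le) hLpos
  set c := (Finset.univ.filter fun i => lam i < x).card with hc
  have hsubset : (Finset.univ.filter fun i => lam i < x) ⊆ Finset.Iio p := by
    intro i hi
    simp only [Finset.mem_filter, Finset.mem_univ, true_and] at hi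
    simp only [Finset.mem_Iio]
    by_contra h
    push_neg at h
    exact absurd hi (not_lt.mpr (hmono h))
  have hc_le : c ≤ (p : ℕ) := by
    simpa [Fin.card_Iio] using Finset.card_le_card hsubset
  have hc_eq : c = (p : ℕ) := by
    rcases lt_or_eq_of_le hc_le with hlt | h
    · exfalso
      have hss : (Finset.univ.filter fun i => lam i < x) ⊂ Finset.Iio p := by
        refine ⟨hsubset, fun hsub => ?_⟩
        have := Finset.card_le_card hsub
        rw [Fin.card_Iio] at this
        omega
      obtain ⟨i, hip, hinot⟩ := Finset.exists_of_ssubset hss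
      have hip' : i < p := Finset.mem_Iio.mp hip
      have hieq : lam i = x := by
        refine le_antisymm (hmono hip'.le) (not_lt.mp ?_)
        intro hcon
        exact hinot (by simp [hcon])
      have h2 : ({i, p} : Finset (Fin N)) ⊆ Finset.univ.filter fun a => lam a = x := by
        intro a ha
        simp only [Finset.mem_insert, Finset.mem_singleton] at ha
        rcases ha with rfl | rfl <;> simp [hieq, hx]
      have hcard2 := Finset.card_le_card h2
      rw [Finset.card_insert_of_notMem (by simp [ne_of_lt hip']),
        Finset.card_singleton, hLone] at hcard2
      omega
    · exact h
  have hμeq1 : (Finset.univ.filter fun i => μ i = x).card = 1 := hceq.trans hLone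
  have hμj : μ j = x := by
    obtain ⟨a, ha⟩ := Finset.card_eq_one.mp hμeq1
    have hamem : a ∈ Finset.univ.filter fun i => μ i = x := by
      rw [ha]; exact Finset.mem_singleton_self a
    simp only [Finset.mem_filter, Finset.mem_univ, true_and] at hamem
    rcases eq_or_ne a j with rfl | h
    · exact hamem
    · exact absurd hamem (hne a h)
  have hjnotlt : ¬ μ j < x := by rw [hμj]; exact lt_irrefl x
  set S := (Finset.univ.erase j).filter (fun i => μ i < x) with hSdef
  have hS : S = Finset.univ.filter fun i => μ i < x := by
    ext a
    simp only [hSdef, Finset.mem_filter, Finset.mem_erase, Finset.mem_univ, true_and, and_true]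
    constructor
    · exact fun h => h.2
    · intro h
      exact ⟨fun h' => hjnotlt (h' ▸ h), h⟩
  have hScard : S.card = (p : ℕ) := by
    rw [hS, ← hclt] at *
    omega
  rw [← Finset.prod_filter_mul_prod_filter_not (Finset.univ.erase j) (fun i => μ i < x)]
  have hSprod : ∏ i ∈ S, (μ i - x) = (-1 : ℝ) ^ (p : ℕ) * ∏ i ∈ S, (x - μ i) := by
    rw [← hScard]
    calc ∏ i ∈ S, (μ i - x) = ∏ i ∈ S, (-1) * (x - μ i) := by
          apply Finset.prod_congr rfl; intros; ring
      _ = (-1 : ℝ) ^ S.card * ∏ i ∈ S, (x - μ i) := by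
          rw [Finset.prod_mul_distrib, Finset.prod_const]
  have h1 : (0 : ℝ) ≤ ∏ i ∈ S, (x - μ i) := by
    apply Finset.prod_nonneg
    intro i hi
    simp only [hSdef, Finset.mem_filter] at hi
    linarith [hi.2]
  have h2 : (0 : ℝ) ≤ ∏ i ∈ (Finset.univ.erase j).filter (fun i => ¬ μ i < x), (μ i - x) := by
    apply Finset.prod_nonneg
    intro i hi
    simp only [Finset.mem_filter] at hi
    linarith [not_lt.mp hi.2]
  rw [show (Finset.univ.erase j).filter (fun i => μ i < x) = S from rfl, hSprod]
  have key : (-1 : ℝ) ^ (p : ℕ) * ((-1 : ℝ) ^ (p : ℕ) * (∏ i ∈ S, (x - μ i)) *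
      ∏ i ∈ (Finset.univ.erase j).filter (fun i => ¬ μ i < x), (μ i - x))
      = (∏ i ∈ S, (x - μ i)) *
      ∏ i ∈ (Finset.univ.erase j).filter (fun i => ¬ μ i < x), (μ i - x) := by
    rw [← mul_assoc, ← mul_assoc, ← mul_pow]
    norm_num
  rw [key]
  exact mul_nonneg h1 h2

private lemma my_conj_sub {m : ℕ} {U V A : Matrix (Fin m) (Fin m) ℝ} {μ : Fin m → ℝ}
    (hUV : U * V = 1) (hspec : A = U * Matrix.diagonal μ * V) (t : ℝ) :
    A - t • (1 : Matrix (Fin m) (Fin m) ℝ) = U * Matrix.diagonal (fun i => μ i - t) * V := by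
  have hd : Matrix.diagonal (fun i => μ i - t) = Matrix.diagonal μ - t • 1 := by
    rw [Matrix.smul_one_eq_diagonal, ← Matrix.diagonal_sub]
  rw [hd, mul_sub, sub_mul, ← hspec]
  congr 1
  rw [Matrix.mul_smul, mul_one, Matrix.smul_mul, hUV]

private lemma my_det_sub {m : ℕ} {U V A : Matrix (Fin m) (Fin m) ℝ} {μ : Fin m → ℝ}
    (hUV : U * V = 1) (hspec : A = U * Matrix.diagonal μ * V) (t : ℝ) :
    (A - t • (1 : Matrix (Fin m) (Fin m) ℝ)).det = ∏ i, (μ i - t) := by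
  have hdet : U.det * V.det = 1 := by rw [← Matrix.det_mul, hUV, Matrix.det_one]
  rw [my_conj_sub hUV hspec t, Matrix.det_mul, Matrix.det_mul, Matrix.det_diagonal]
  rw [mul_comm U.det _, mul_assoc, hdet, mul_one]

private lemma my_submatrix_det {m : ℕ} {U V A : Matrix (Fin (m + 1)) (Fin (m + 1)) ℝ}
    {μ : Fin (m + 1) → ℝ}
    (hUV : U * V = 1) (hVU : V * U = 1) (hVsym : ∀ i j, V i j = U j i)
    (hspec : A = U * Matrix.diagonal μ * V) (t : ℝ) (k : Fin (m + 1)) :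
    (A.submatrix k.succAbove k.succAbove - t • (1 : Matrix (Fin m) (Fin m) ℝ)).det
      = ∑ j, (U k j) ^ 2 * ∏ i ∈ Finset.univ.erase j, (μ i - t) := by
  have hdet : U.det * V.det = 1 := by rw [← Matrix.det_mul, hUV, Matrix.det_one]
  have hadjU : U.adjugate = U.det • V := by
    calc U.adjugate = (V * U) * U.adjugate := by rw [hVU, one_mul]
      _ = V * (U * U.adjugate) := by rw [Matrix.mul_assoc]
      _ = V * (U.det • 1) := by rw [Matrix.mul_adjugate]
      _ = U.det • V := by rw [Matrix.mul_smul, mul_one]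
  have hadjV : V.adjugate = V.det • U := by
    calc V.adjugate = (U * V) * V.adjugate := by rw [hUV, one_mul]
      _ = U * (V * V.adjugate) := by rw [Matrix.mul_assoc]
      _ = U * (V.det • 1) := by rw [Matrix.mul_adjugate]
      _ = V.det • U := by rw [Matrix.mul_smul, mul_one]
  set D := Matrix.diagonal (fun i => μ i - t) with hD
  have hadjB : (A - t • 1).adjugate = U * D.adjugate * V := by
    rw [my_conj_sub hUV hspec t, ← hD, Matrix.adjugate_mul_distrib,
      Matrix.adjugate_mul_distrib, hadjU, hadjV]
    rw [Matrix.smul_mul, Matrix.mul_smul, Matrix.mul_smul, smul_smul, mul_comm V.det U.det,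
      hdet, one_smul, ← Matrix.mul_assoc]
  have h1 : A.submatrix k.succAbove k.succAbove - t • (1 : Matrix (Fin m) (Fin m) ℝ)
      = (A - t • 1).submatrix k.succAbove k.succAbove := by
    ext i j
    simp [Matrix.submatrix_apply, Matrix.sub_apply, Matrix.smul_apply, Matrix.one_apply,
      (Fin.succAbove_right_injective (p := k)).eq_iff]
  have h2 := Matrix.adjugate_fin_succ_eq_det_submatrix (A - t • 1) k k
  have hsign : ((-1 : ℝ)) ^ ((k : ℕ) + (k : ℕ)) = 1 := by
    rw [← two_mul, pow_mul]; norm_num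
  rw [h1, ← one_mul ((A - t • 1).submatrix k.succAbove k.succAbove).det, ← hsign, ← h2]
  rw [hadjB, hD, Matrix.adjugate_diagonal, Matrix.mul_assoc, Matrix.mul_apply]
  refine Finset.sum_congr rfl fun j _ => ?_
  rw [Matrix.diagonal_mul, hVsym]
  ring

private lemma my_roots_prod {N : ℕ} (f : Fin N → ℝ) :
    (∏ i, (X - C (f i)) : ℝ[X]).roots = Finset.univ.val.map f := by
  rw [← Polynomial.roots_multiset_prod_X_sub_C (Finset.univ.val.map f), Multiset.map_map]
  rw [Finset.prod_eq_multiset_prod]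
  rfl


/-- Let `A` be an `(n+1) × (n+1)` real symmetric matrix (`n + 1 ≥ 2`) with
eigenvalues `lam 0 ≤ lam 1 ≤ ⋯ ≤ lam n` listed with multiplicity, and let
`A_k` be the principal submatrix obtained by deleting row `k` and column `k`.
Then `(-1)^p · det (A_k - lam p • I) ≥ 0` for every `p` (with zero-based
indexing, matching `(-1)^{p-1}` for one-based indexing). -/
theorem symmetric_submatrix_charpoly_sign (n : ℕ) (hn : 1 ≤ n)
    (A : Matrix (Fin (n + 1)) (Fin (n + 1)) ℝ) (hA : A.IsSymm)
    (lam : Fin (n + 1) → ℝ) (hlam : Monotone lam)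
    (hlamEig : A.charpoly = ∏ i, (X - C (lam i)))
    (k : Fin (n + 1)) :
    ∀ p : Fin (n + 1),
      0 ≤ (-1 : ℝ) ^ (p : ℕ) *
        (A.submatrix k.succAbove k.succAbove -
          lam p • (1 : Matrix (Fin n) (Fin n) ℝ)).det := by
  classical
  have hH : A.IsHermitian := by
    rw [Matrix.IsHermitian, Matrix.conjTranspose_eq_transpose_of_trivial]
    exact hA
  set μ : Fin (n + 1) → ℝ := hH.eigenvalues with hμ
  set U : Matrix (Fin (n + 1)) (Fin (n + 1)) ℝ := (hH.eigenvectorUnitary : Matrix (Fin (n + 1)) (Fin (n + 1)) ℝ)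
    with hU
  set V : Matrix (Fin (n + 1)) (Fin (n + 1)) ℝ := star U with hV
  have hmem := hH.eigenvectorUnitary.2
  rw [Unitary.mem_iff] at hmem
  obtain ⟨hVU, hUV⟩ := hmem
  have hVsym : ∀ i j, V i j = U j i := by
    intro i j
    simp [hV, Matrix.star_apply]
  have hspec : A = U * Matrix.diagonal μ * V := by
    have := hH.spectral_theorem
    rwa [RCLike.ofReal_real_eq_id, Function.id_comp] at this
  -- the multiset of `μ`'s equals the multiset of `lam`'s
  have hprod : ∀ t : ℝ, ∏ i, (t - μ i) = ∏ i, (t - lam i) := by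
    intro t
    have h1 : A.charpoly.eval t = ∏ i, (t - lam i) := by
      rw [hlamEig]
      simp [Polynomial.eval_prod]
    have h2 : A.charpoly.eval t = ∏ i, (t - μ i) := by
      rw [my_eval_charpoly]
      have hneg : t • (1 : Matrix (Fin (n + 1)) (Fin (n + 1)) ℝ) - A = -(A - t • 1) :=
        (neg_sub _ _).symm
      rw [hneg, Matrix.det_neg, my_det_sub hUV hspec t, Fintype.card_fin]
      rw [show (∏ i : Fin (n + 1), (t - μ i)) = ∏ i : Fin (n + 1), (-1 : ℝ) * (μ i - t) from
        Finset.prod_congr rfl fun i _ => by ring]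
      rw [Finset.prod_mul_distrib, Finset.prod_const, Finset.card_univ, Fintype.card_fin]
    rw [← h1, h2]
  have hpoly : (∏ i, (X - C (μ i)) : ℝ[X]) = ∏ i, (X - C (lam i)) := by
    apply Polynomial.funext
    intro t
    simpa [Polynomial.eval_prod] using hprod t
  have hms : Finset.univ.val.map μ = Finset.univ.val.map lam := by
    have := congrArg Polynomial.roots hpoly
    rwa [my_roots_prod, my_roots_prod] at this
  intro p
  rw [my_submatrix_det hUV hVU hVsym hspec (lam p) k, Finset.mul_sum]
  apply Finset.sum_nonneg
  intro j _
  have hkey := my_sign_key μ lam hlam hms p j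
  have hre : (-1 : ℝ) ^ (p : ℕ) * ((U k j) ^ 2 * ∏ i ∈ Finset.univ.erase j, (μ i - lam p))
      = (U k j) ^ 2 * ((-1 : ℝ) ^ (p : ℕ) * ∏ i ∈ Finset.univ.erase j, (μ i - lam p)) := by
    ring
  rw [hre]
  exact mul_nonneg (sq_nonneg _) hkey
end

section
/- Let A be an m×m real symmetrizable matrix with m ≥ 2, let λ_1 ≤ λ_2 ≤ ... ≤ λ_m be its eigenvalues listed with multiplicity (they are all real), let k ∈ {1,...,m}, and let A_k be the (m−1)×(m−1) principal submatrix of A obtained by deleting row k and column k. Then for every p with 1 ≤ p ≤ m, one has (−1)^{p−1} · det(A_k − λ_p I_{m−1}) ≥ 0. -/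
/-!
Conjugating `A` by `D^{1/2}` gives a symmetric matrix `B` with the same characteristic
polynomial, whose principal submatrices are likewise conjugate to those of `A`. Writing
`B = U diag(μ) Uᵀ` with `U` orthogonal,
`det(x - B_k) = adj(x - B)_{kk} = ∑ᵢ U_{ki}² ∏_{j ≠ i} (x - μ_j)`.
At `x = λ_p`, every term with `μ_i ≠ λ_p` contains the vanishing factor `λ_p - λ_p`, and every
other term equals `∏_{j ≠ p} (λ_p - λ_j)`, whose sign is `(-1)^{n-p}` because `λ` is sorted.
-/

open Polynomial

open Matrix Finset

namespace Matrix

section Conj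

variable {m n R : Type*} [Fintype n] [DecidableEq n]

theorem submatrix_diagonal_mul_mul_diagonal [Fintype m] [DecidableEq m]
    [NonUnitalNonAssocSemiring R] (e f : n → R)
    (A : Matrix n n R) (g : m → n) :
    (diagonal e * A * diagonal f).submatrix g g =
      diagonal (e ∘ g) * A.submatrix g g * diagonal (f ∘ g) := by
  ext i j
  simp [mul_diagonal, diagonal_mul]

variable [CommRing R] {U V : Matrix n n R}

theorem charpoly_conj (hVU : V * U = 1) (M : Matrix n n R) :
    (U * M * V).charpoly = M.charpoly := by
  rw [charpoly_mul_comm, ← mul_assoc, hVU, one_mul]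

theorem adjugate_conj (hVU : V * U = 1) (M : Matrix n n R) :
    (U * M * V).adjugate = U * M.adjugate * V := by
  have hUV : U * V = 1 := mul_eq_one_comm.mp hVU
  have hU : U.adjugate = U.det • V := by
    rw [← Matrix.mul_one U.adjugate, ← hUV, ← Matrix.mul_assoc, adjugate_mul, smul_mul, one_mul]
  have hV : V.adjugate = V.det • U := by
    rw [← Matrix.mul_one V.adjugate, ← hVU, ← Matrix.mul_assoc, adjugate_mul, smul_mul, one_mul]
  rw [adjugate_mul_distrib, adjugate_mul_distrib, hU, hV]
  simp only [Matrix.mul_smul, Matrix.smul_mul, smul_smul]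
  rw [← det_mul, hUV, det_one, one_smul, Matrix.mul_assoc]

theorem charpoly_submatrix_diagonal_conj [Fintype m] [DecidableEq m] {K : Type*} [Field K]
    {e : n → K} (he : ∀ i, e i ≠ 0) (A : Matrix n n K) (g : m → n) :
    ((diagonal e * A * diagonal e⁻¹).submatrix g g).charpoly = (A.submatrix g g).charpoly := by
  have hinv : diagonal (e⁻¹ ∘ g) * diagonal (e ∘ g) = 1 := by
    rw [diagonal_mul_diagonal, ← diagonal_one]
    exact congrArg diagonal (funext fun i => inv_mul_cancel₀ (he (g i)))
  rw [submatrix_diagonal_mul_mul_diagonal, charpoly_conj hinv]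

end Conj

theorem Symmetrizable.exists_isHermitian_diagonal_conj {n : Type*} [Fintype n]
    [DecidableEq n] {A : Matrix n n ℝ} (hA : A.Symmetrizable) :
    ∃ e : n → ℝ, (∀ i, 0 < e i) ∧ (diagonal e * A * diagonal e⁻¹).IsHermitian := by
  obtain ⟨d, hd, hdA⟩ := hA
  refine ⟨fun i => √(d i), fun i => Real.sqrt_pos.2 (hd i), ?_⟩
  ext i j
  have hij : d j * A j i = d i * A i j := by
    simpa [diagonal_mul] using congrFun (congrFun hdA i) j
  have hi := Real.sqrt_pos.2 (hd i)
  have hj := Real.sqrt_pos.2 (hd j)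
  simp only [conjTranspose_apply, star_trivial, mul_diagonal, diagonal_mul, Pi.inv_apply]
  field_simp
  rw [Real.sq_sqrt (hd i).le, Real.sq_sqrt (hd j).le]
  linarith

theorem eval_charpoly_submatrix_succAbove {R : Type*} [CommRing R] {n : ℕ}
    (B : Matrix (Fin (n + 1)) (Fin (n + 1)) R) (k : Fin (n + 1)) (x : R) :
    (B.submatrix k.succAbove k.succAbove).charpoly.eval x = (scalar _ x - B).adjugate k k := by
  rw [adjugate_fin_succ_eq_det_submatrix, ← two_mul, pow_mul, neg_one_sq, one_pow, one_mul,
    eval_charpoly]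
  congr 1
  ext i j
  simp [scalar_apply, diagonal_apply]

theorem IsHermitian.adjugate_scalar_sub_apply_self {n : Type*} [Fintype n]
    [DecidableEq n] {B : Matrix n n ℝ} (hB : B.IsHermitian) (x : ℝ) (k : n) :
    (scalar n x - B).adjugate k k =
      ∑ i, (∏ j ∈ univ.erase i, (x - hB.eigenvalues j)) * hB.eigenvectorUnitary k i ^ 2 := by
  set U : Matrix n n ℝ := (hB.eigenvectorUnitary : Matrix n n ℝ)
  have hUU : star U * U = 1 := Unitary.coe_star_mul_self _
  have hspec : scalar n x - B = U * diagonal (fun i => x - hB.eigenvalues i) * star U := by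
    conv_lhs => rw [hB.spectral_theorem]
    have hUU' : U * star U = 1 := mul_eq_one_comm.mp hUU
    rw [Unitary.conjStarAlgAut_apply, ← diagonal_sub, Matrix.mul_sub, Matrix.sub_mul,
      ← smul_one_eq_diagonal, Matrix.mul_smul, Matrix.smul_mul, Matrix.mul_one, hUU',
      smul_one_eq_diagonal, scalar_apply]
    rfl -- `RCLike.ofReal` is the identity of `ℝ`
  rw [hspec, adjugate_conj hUU, adjugate_diagonal, mul_apply]
  refine sum_congr rfl fun i _ => ?_
  simp [mul_diagonal, sq]
  ring

end Matrix

theorem Monotone.neg_one_pow_mul_prod_erase_sub_nonneg {n : ℕ} {lam : Fin (n + 1) → ℝ}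
    (hlam : Monotone lam) (p : Fin (n + 1)) :
    0 ≤ (-1) ^ (n - p : ℕ) * ∏ j ∈ univ.erase p, (lam p - lam j) := by
  have hIoi : ∏ j ∈ Ioi p, (lam p - lam j) =
      (-1) ^ (n - p : ℕ) * ∏ j ∈ Ioi p, (lam j - lam p) := by
    rw [show n - (p : ℕ) = #(Ioi p) by simp [Fin.card_Ioi], ← prod_neg]
    simp
  rw [← compl_singleton, ← Ioi_disjUnion_Iio, prod_disjUnion, hIoi, ← mul_assoc, ← mul_assoc,
    ← pow_add, Even.neg_one_pow ⟨_, rfl⟩, one_mul]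
  exact mul_nonneg (prod_nonneg fun j hj => sub_nonneg.2 (hlam (mem_Ioi.1 hj).le))
    (prod_nonneg fun j hj => sub_nonneg.2 (hlam (mem_Iio.1 hj).le))

section

variable {ι κ K : Type*} [Fintype ι] [DecidableEq ι] [Fintype κ] [CommRing K] [IsDomain K]
  {μ : ι → K} {ν : κ → K}

theorem prod_erase_sub_eq_of_prod_X_sub_C_eq [DecidableEq κ]
    (h : ∏ j, (X - C (μ j)) = ∏ j, (X - C (ν j)))
    {i : ι} {p : κ} (hip : μ i = ν p) (x : K) :
    ∏ j ∈ univ.erase i, (x - μ j) = ∏ j ∈ univ.erase p, (x - ν j) := by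
  have hpoly : ∏ j ∈ univ.erase i, (X - C (μ j)) = ∏ j ∈ univ.erase p, (X - C (ν j)) := by
    apply mul_right_cancel₀ (X_sub_C_ne_zero (μ i))
    rw [prod_erase_mul _ _ (mem_univ i), h, hip, prod_erase_mul _ _ (mem_univ p)]
  simpa [eval_prod] using congrArg (eval x) hpoly

theorem prod_erase_sub_eq_zero_of_prod_X_sub_C_eq
    (h : ∏ j, (X - C (μ j)) = ∏ j, (X - C (ν j)))
    {i : ι} {p : κ} (hip : μ i ≠ ν p) :
    ∏ j ∈ univ.erase i, (ν p - μ j) = 0 := by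
  have hroot : ∏ j, (ν p - μ j) = 0 := by
    rw [← prod_eq_zero (f := fun j => ν p - ν j) (mem_univ p) (sub_self (ν p))]
    simpa [eval_prod] using congrArg (eval (ν p)) h
  obtain ⟨j, -, hj⟩ := prod_eq_zero_iff.1 hroot
  have hji : j ≠ i := by
    rintro rfl
    exact hip (sub_eq_zero.1 hj).symm
  exact prod_eq_zero (mem_erase.2 ⟨hji, mem_univ j⟩) hj

end

theorem Monotone.neg_one_pow_mul_prod_erase_sub_nonneg_of_prod_X_sub_C_eq {ι : Type*}
    [Fintype ι] [DecidableEq ι] {n : ℕ} {lam : Fin (n + 1) → ℝ} (hlam : Monotone lam) {μ : ι → ℝ}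
    (h : ∏ j, (X - C (μ j)) = ∏ j, (X - C (lam j))) (p : Fin (n + 1)) (i : ι) :
    0 ≤ (-1) ^ (n - p : ℕ) * ∏ j ∈ univ.erase i, (lam p - μ j) := by
  by_cases hip : μ i = lam p
  · rw [prod_erase_sub_eq_of_prod_X_sub_C_eq h hip]
    exact hlam.neg_one_pow_mul_prod_erase_sub_nonneg p
  · rw [prod_erase_sub_eq_zero_of_prod_X_sub_C_eq h hip, mul_zero]

/-- Indices start at `0`: here `m = n + 1`, and `(-1) ^ p` is the one-based `(-1)^{p-1}`. -/
theorem symmetrizable_submatrix_charpoly_sign_general (n : ℕ)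
    (A : Matrix (Fin (n + 1)) (Fin (n + 1)) ℝ) (hA : A.Symmetrizable)
    (lam : Fin (n + 1) → ℝ) (hlam : Monotone lam)
    (hlamEig : A.charpoly = ∏ i, (X - C (lam i)))
    (k : Fin (n + 1)) :
    ∀ p : Fin (n + 1),
      0 ≤ (-1 : ℝ) ^ (p : ℕ) *
        (A.submatrix k.succAbove k.succAbove -
          lam p • (1 : Matrix (Fin n) (Fin n) ℝ)).det := by
  intro p
  obtain ⟨e, he, hB⟩ := hA.exists_isHermitian_diagonal_conj
  have he' : ∀ i, e i ≠ 0 := fun i => (he i).ne'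
  have heig : ∏ i, (X - C (hB.eigenvalues i)) = ∏ i, (X - C (lam i)) := by
    have hchar := charpoly_submatrix_diagonal_conj he' A id
    rw [submatrix_id_id, submatrix_id_id, hB.charpoly_eq, hlamEig] at hchar
    simpa using hchar
  have hpow : (-1 : ℝ) ^ (p : ℕ) * (-1) ^ n = (-1) ^ (n - p : ℕ) := by
    rw [← pow_add, show (p : ℕ) + n = (n - p) + 2 * p by omega, pow_add, pow_mul, neg_one_sq,
      one_pow, mul_one]
  rw [← neg_sub, det_neg, Fintype.card_fin, smul_one_eq_diagonal, ← scalar_apply,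
    ← eval_charpoly, ← charpoly_submatrix_diagonal_conj he', eval_charpoly_submatrix_succAbove,
    hB.adjugate_scalar_sub_apply_self, ← mul_assoc, hpow, mul_sum]
  exact sum_nonneg fun i _ => by
    rw [← mul_assoc]
    exact mul_nonneg (hlam.neg_one_pow_mul_prod_erase_sub_nonneg_of_prod_X_sub_C_eq heig p i)
      (sq_nonneg _)

/-- Let `A` be an `(n+1) × (n+1)` real symmetrizable matrix (`n + 1 ≥ 2`) with
(real) eigenvalues `lam 0 ≤ lam 1 ≤ ⋯ ≤ lam n` listed with multiplicity, and
let `A_k` be the principal submatrix obtained by deleting row `k` and column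
`k`. Then `(-1)^p · det (A_k - lam p • I) ≥ 0` for every `p` (with zero-based
indexing, matching `(-1)^{p-1}` for one-based indexing). -/
theorem symmetrizable_submatrix_charpoly_sign (n : ℕ) (hn : 1 ≤ n)
    (A : Matrix (Fin (n + 1)) (Fin (n + 1)) ℝ) (hA : A.Symmetrizable)
    (lam : Fin (n + 1) → ℝ) (hlam : Monotone lam)
    (hlamEig : A.charpoly = ∏ i, (X - C (lam i)))
    (k : Fin (n + 1)) :
    ∀ p : Fin (n + 1),
      0 ≤ (-1 : ℝ) ^ (p : ℕ) *
        (A.submatrix k.succAbove k.succAbove -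
          lam p • (1 : Matrix (Fin n) (Fin n) ℝ)).det :=
  symmetrizable_submatrix_charpoly_sign_general n A hA lam hlam hlamEig k
end
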